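/- Let G_0 = K_1 ∨ Θ(2,2,2) with universal vertex w, and let H = (L,H) be the 4-fold cover of G_0 in which all matchings are identity matchings except those from v_1 to u_2 (shifted by +1 cyclically) and from v_1 to u_3 (shifted by +2 cyclically). Then for each j ∈ [4], the number of H-colorings of G_0 containing (w,j) equals 26. -/
import Mathlib


open SimpleGraph

/-- An `m`-fold cover of a graph `G`, with lists canonically labeled by `Fin m`. -/
structure DPCover {V : Type} (G : SimpleGraph V) (m : ℕ) where
  H : SimpleGraph (V × Fin m)
  part_complete : ∀ (v : V) (a b : Fin m), a ≠ b → H.Adj (v, a) (v, b)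
  cross : ∀ (u v : V) (a b : Fin m), u ≠ v → H.Adj (u, a) (v, b) → G.Adj u v
  matching_right : ∀ (u v : V) (a b b' : Fin m), u ≠ v →
    H.Adj (u, a) (v, b) → H.Adj (u, a) (v, b') → b = b'
  matching_left : ∀ (u v : V) (a a' b : Fin m), u ≠ v →
    H.Adj (u, a) (v, b) → H.Adj (u, a') (v, b) → a = a'

/-- A cover is full if every matching between lists of adjacent vertices is perfect. -/
def DPCover.IsFull {V : Type} {G : SimpleGraph V} {m : ℕ} (C : DPCover G m) : Prop :=
  ∀ u v : V, G.Adj u v → ∀ a : Fin m, ∃ b : Fin m, C.H.Adj (u, a) (v, b)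

/-- An `H`-coloring: a choice of one list element per vertex forming an independent set. -/
def DPCover.IsColoring {V : Type} {G : SimpleGraph V} {m : ℕ} (C : DPCover G m)
    (c : V → Fin m) : Prop :=
  ∀ u v : V, ¬ C.H.Adj (u, c u) (v, c v)

/-- The number of `H`-colorings of `G` with respect to the cover `C`. -/
noncomputable def dpCount {V : Type} {G : SimpleGraph V} {m : ℕ} (C : DPCover G m) : ℕ :=
  Nat.card {c : V → Fin m // C.IsColoring c}

/-- `N(P, C)`: the number of `H`-colorings containing the set `P` of cover vertices. -/
noncomputable def NCount {V : Type} {G : SimpleGraph V} {m : ℕ} (C : DPCover G m)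
    (P : Set (V × Fin m)) : ℕ :=
  Nat.card {c : V → Fin m // C.IsColoring c ∧ ∀ p ∈ P, c p.1 = p.2}

/-- The DP color function: minimum number of colorings over all `m`-fold covers. -/
noncomputable def PDP {V : Type} (G : SimpleGraph V) (m : ℕ) : ℕ :=
  sInf {n : ℕ | ∃ C : DPCover G m, dpCount C = n}

/-- The number of proper `m`-colorings (the chromatic polynomial evaluated at `m`). -/
noncomputable def properCount {V : Type} (G : SimpleGraph V) (m : ℕ) : ℕ :=
  Nat.card {c : V → Fin m // ∀ u v : V, G.Adj u v → c u ≠ c v}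

/-- A cover has a canonical labeling if lists can be renamed so all cross edges are
`(u,j)(v,j)`. -/
def DPCover.HasCanonicalLabeling {V : Type} {G : SimpleGraph V} {m : ℕ}
    (C : DPCover G m) : Prop :=
  ∃ σ : V → Equiv.Perm (Fin m), ∀ u v : V, G.Adj u v → ∀ j : Fin m,
    C.H.Adj (u, σ u j) (v, σ v j)

/-- `G0 = K_1 ∨ Θ(2,2,2)`: the cone over `K_{2,3}` (with `none` the universal vertex,
`some (Sum.inl a)` the degree-3 vertices `v₁, v₂` of the Theta graph, and
`some (Sum.inr b)` the degree-2 vertices `u₁, u₂, u₃`). -/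
def G0 : SimpleGraph (Option (Fin 2 ⊕ Fin 3)) :=
  SimpleGraph.fromRel (fun x y => x = none ∨
    ∃ a b, x = some (Sum.inl a) ∧ y = some (Sum.inr b))

/-- The twisting of the matchings of the special 4-fold cover of `G0`: the matching
from `v₁` to `u₂` is shifted by `+1` cyclically, the one from `v₁` to `u₃` by `+2`,
and all other matchings are identity matchings. -/
def twist (x y : Option (Fin 2 ⊕ Fin 3)) (j : Fin 4) : Fin 4 :=
  if x = some (Sum.inl 0) ∧ y = some (Sum.inr 1) then j + 1
  else if x = some (Sum.inl 0) ∧ y = some (Sum.inr 2) then j + 2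
  else if y = some (Sum.inl 0) ∧ x = some (Sum.inr 1) then j - 1
  else if y = some (Sum.inl 0) ∧ x = some (Sum.inr 2) then j - 2
  else j


instance G0.adjDecidable : DecidableRel G0.Adj := fun x y =>
  decidable_of_iff _ (SimpleGraph.fromRel_adj _ x y).symm

set_option maxHeartbeats 4000000 in
set_option maxRecDepth 10000 in
theorem NCount_G0_twistedCover (C : DPCover G0 4)
    (hC : ∀ (x y : Option (Fin 2 ⊕ Fin 3)) (r s : Fin 4),
      C.H.Adj (x, r) (y, s) ↔ ((x = y ∧ r ≠ s) ∨ (G0.Adj x y ∧ s = twist x y r))) :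
    ∀ j : Fin 4, NCount C ({(none, j)} : Set (Option (Fin 2 ⊕ Fin 3) × Fin 4)) = 26 := by
  intro j
  have e : {c : Option (Fin 2 ⊕ Fin 3) → Fin 4 // C.IsColoring c ∧
      ∀ p ∈ ({(none, j)} : Set (Option (Fin 2 ⊕ Fin 3) × Fin 4)), c p.1 = p.2} ≃
      {c : Option (Fin 2 ⊕ Fin 3) → Fin 4 //
        (∀ u v, ¬ ((u = v ∧ c u ≠ c v) ∨ (G0.Adj u v ∧ c v = twist u v (c u)))) ∧
        c none = j} := by
    apply Equiv.subtypeEquivRight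
    intro c
    constructor
    · rintro ⟨h1, h2⟩
      exact ⟨fun u v => (hC u v (c u) (c v)).not.mp (h1 u v), h2 (none, j) rfl⟩
    · rintro ⟨h1, h2⟩
      refine ⟨fun u v => (hC u v (c u) (c v)).not.mpr (h1 u v), ?_⟩
      rintro p hp
      rw [Set.mem_singleton_iff] at hp
      subst hp; exact h2
  unfold NCount
  rw [Nat.card_congr e, Nat.card_eq_fintype_card]
  clear e
  revert j; decide
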